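/- For any l ∈ ℕ₀^r, the polynomial identity u_1⋯u_r P_{l_1,…,l_r}(u_1,…,u_r) = u_1^{l_1} · (u_2⋯u_r P_{l_2,…,l_r}(u_2,…,u_r)) + u_2^{l_3}⋯u_{r-1}^{l_r} · u_1 u_r · ( ((u_1+⋯+u_r)^{l_1−1} − u_1^{l_1−1})(−u_2−⋯−u_r)^{l_2−1} + (−u_1−⋯−u_r)^{l_1−1} u_1^{l_2−1} ) holds in ℚ(u_1,…,u_r). -/

import Mathlib

open Finset

/-- `Ssum K r u i = u_i + u_{i+1} + ⋯ + u_r` (1-based indexing). -/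
noncomputable def Ssum (K : Type*) [Field K] (r : ℕ) (u : ℕ → K) (i : ℕ) : K :=
  ∑ j ∈ Finset.Icc i r, u j

/-- The rational function
`P_l(u_1,…,u_r) = ∑_{i=0}^{r} u_1^{l_1−1}⋯u_{i−1}^{l_{i−1}−1}(u_i+⋯+u_r)^{l_i−1}
(−u_{i+1}−⋯−u_r)^{l_{i+1}−1} u_{i+1}^{l_{i+2}−1}⋯u_{r-1}^{l_r−1}`. -/
noncomputable def Pfun (K : Type*) [Field K] (r : ℕ) (l : ℕ → ℕ) (u : ℕ → K) : K :=
  (-(Ssum K r u 1)) ^ ((l 1 : ℤ) - 1) *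
      ∏ j ∈ Finset.Icc 1 (r - 1), u j ^ ((l (j + 1) : ℤ) - 1)
    + (∑ i ∈ Finset.Icc 1 (r - 1),
        (∏ j ∈ Finset.Icc 1 (i - 1), u j ^ ((l j : ℤ) - 1))
          * (Ssum K r u i) ^ ((l i : ℤ) - 1)
          * (-(Ssum K r u (i + 1))) ^ ((l (i + 1) : ℤ) - 1)
          * ∏ j ∈ Finset.Icc (i + 1) (r - 1), u j ^ ((l (j + 1) : ℤ) - 1))
    + (∏ j ∈ Finset.Icc 1 (r - 1), u j ^ ((l j : ℤ) - 1)) * u r ^ ((l r : ℤ) - 1)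

/-- The field of rational functions `ℚ(u_1, u_2, …)`. -/
abbrev K₀ : Type _ := FractionRing (MvPolynomial ℕ ℚ)

/-- The indeterminate `u_j` viewed inside `ℚ(u_1, u_2, …)`. -/
noncomputable def uvar (j : ℕ) : K₀ :=
  algebraMap (MvPolynomial ℕ ℚ) K₀ (MvPolynomial.X j)


lemma prod_Icc_shift {M : Type*} [CommMonoid M] (a b : ℕ) (f : ℕ → M) :
    ∏ j ∈ Icc a b, f (j + 1) = ∏ j ∈ Icc (a + 1) (b + 1), f j := by
  rw [← Finset.map_add_right_Icc a b 1, Finset.prod_map]; rfl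

lemma sum_Icc_shift {M : Type*} [AddCommMonoid M] (a b : ℕ) (f : ℕ → M) :
    ∑ j ∈ Icc a b, f (j + 1) = ∑ j ∈ Icc (a + 1) (b + 1), f j := by
  rw [← Finset.map_add_right_Icc a b 1, Finset.sum_map]; rfl

lemma prod_Icc_bot {M : Type*} [CommMonoid M] {a b : ℕ} (h : a ≤ b) (f : ℕ → M) :
    ∏ j ∈ Icc a b, f j = f a * ∏ j ∈ Icc (a + 1) b, f j := by
  rw [← Finset.Ico_add_one_right_eq_Icc, Finset.prod_eq_prod_Ico_succ_bot (by omega), Finset.Ico_add_one_right_eq_Icc]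

lemma sum_Icc_bot {M : Type*} [AddCommMonoid M] {a b : ℕ} (h : a ≤ b) (f : ℕ → M) :
    ∑ j ∈ Icc a b, f j = f a + ∑ j ∈ Icc (a + 1) b, f j := by
  rw [← Finset.Ico_add_one_right_eq_Icc, Finset.sum_eq_sum_Ico_succ_bot (by omega), Finset.Ico_add_one_right_eq_Icc]

lemma prod_Icc_top {M : Type*} [CommMonoid M] {a b : ℕ} (h : a ≤ b) (h1 : 1 ≤ b) (f : ℕ → M) :
    ∏ j ∈ Icc a b, f j = (∏ j ∈ Icc a (b - 1), f j) * f b := by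
  obtain ⟨c, rfl⟩ : ∃ c, b = c + 1 := ⟨b - 1, by omega⟩
  simp [Finset.prod_Icc_succ_top (show a ≤ c + 1 by omega)]

lemma pow_eq_mul_zpow {K : Type*} [Field K] {x : K} (hx : x ≠ 0) (n : ℕ) :
    x ^ n = x * x ^ ((n : ℤ) - 1) := by
  have h := zpow_add_one₀ hx ((n : ℤ) - 1)
  rw [sub_add_cancel] at h
  rw [← zpow_natCast, h, mul_comm]

lemma uvar_ne_zero (j : ℕ) : uvar j ≠ 0 := by
  have h : Function.Injective (algebraMap (MvPolynomial ℕ ℚ) K₀) :=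
    IsFractionRing.injective _ _
  simp only [uvar]
  rw [map_ne_zero_iff _ h]
  exact MvPolynomial.X_ne_zero j

/-- The recursion over the length `r`:
`u_1⋯u_r P_{l_1,…,l_r}(u_1,…,u_r) = u_1^{l_1} · (u_2⋯u_r P_{l_2,…,l_r}(u_2,…,u_r))
+ u_2^{l_3}⋯u_{r-1}^{l_r} · u_1 u_r · ( ((u_1+⋯+u_r)^{l_1−1} − u_1^{l_1−1})(−u_2−⋯−u_r)^{l_2−1}
+ (−u_1−⋯−u_r)^{l_1−1} u_1^{l_2−1} )` in `ℚ(u_1,…,u_r)`. -/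
theorem uP_recursion (r : ℕ) (hr : 2 ≤ r) (l : ℕ → ℕ) :
    (∏ j ∈ Finset.Icc 1 r, uvar j) * Pfun K₀ r l uvar =
      uvar 1 ^ (l 1) *
        ((∏ j ∈ Finset.Icc 2 r, uvar j) *
          Pfun K₀ (r - 1) (fun j => l (j + 1)) (fun j => uvar (j + 1)))
      + (∏ j ∈ Finset.Icc 2 (r - 1), uvar j ^ (l (j + 1))) * uvar 1 * uvar r *
          (((Ssum K₀ r uvar 1) ^ ((l 1 : ℤ) - 1) - uvar 1 ^ ((l 1 : ℤ) - 1))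
              * (-(Ssum K₀ r uvar 2)) ^ ((l 2 : ℤ) - 1)
            + (-(Ssum K₀ r uvar 1)) ^ ((l 1 : ℤ) - 1) * uvar 1 ^ ((l 2 : ℤ) - 1)) := by
  have h1 : r - 1 + 1 = r := by omega
  have h2 : r - 2 + 1 = r - 1 := by omega
  have h3 : r - 1 - 1 = r - 2 := by omega
  have hS : ∀ i, Ssum K₀ (r - 1) (fun j => uvar (j + 1)) i = Ssum K₀ r uvar (i + 1) := by
    intro i
    simp only [Ssum]
    rw [sum_Icc_shift, h1]
  simp only [Pfun, hS, h3, h1, Nat.reduceAdd]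
  -- abbreviation for the common summand
  set T₀ : ℕ → K₀ := fun i =>
    (∏ j ∈ Icc 2 i, uvar j ^ ((l j : ℤ) - 1))
      * Ssum K₀ r uvar (i + 1) ^ ((l (i + 1) : ℤ) - 1)
      * (-Ssum K₀ r uvar (i + 1 + 1)) ^ ((l (i + 1 + 1) : ℤ) - 1)
      * ∏ j ∈ Icc (i + 1 + 1) (r - 1), uvar j ^ ((l (j + 1) : ℤ) - 1) with hT₀
  -- LHS sum
  have hBL : ∑ i ∈ Icc 1 (r - 1),
        (∏ j ∈ Icc 1 (i - 1), uvar j ^ ((l j : ℤ) - 1))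
          * Ssum K₀ r uvar i ^ ((l i : ℤ) - 1)
          * (-Ssum K₀ r uvar (i + 1)) ^ ((l (i + 1) : ℤ) - 1)
          * ∏ j ∈ Icc (i + 1) (r - 1), uvar j ^ ((l (j + 1) : ℤ) - 1)
      = Ssum K₀ r uvar 1 ^ ((l 1 : ℤ) - 1) * (-Ssum K₀ r uvar 2) ^ ((l 2 : ℤ) - 1)
          * (∏ j ∈ Icc 2 (r - 1), uvar j ^ ((l (j + 1) : ℤ) - 1))
        + uvar 1 ^ ((l 1 : ℤ) - 1) * ∑ i ∈ Icc 1 (r - 2), T₀ i := by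
    rw [sum_Icc_bot (show 1 ≤ r - 1 by omega)]
    congr 1
    · norm_num
    · rw [Finset.mul_sum]
      rw [show (1 : ℕ) + 1 = 1 + 1 from rfl, ← h2, ← sum_Icc_shift]
      refine Finset.sum_congr rfl fun i hi => ?_
      have hi1 : 1 ≤ i := by simp at hi; omega
      simp only [hT₀, Nat.add_sub_cancel]
      rw [prod_Icc_bot hi1 (fun j => uvar j ^ ((l j : ℤ) - 1)), h2]
      ring
  -- RHS sum
  have hBR : ∑ i ∈ Icc 1 (r - 2),
        (∏ j ∈ Icc 1 (i - 1), uvar (j + 1) ^ ((l (j + 1) : ℤ) - 1))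
          * Ssum K₀ r uvar (i + 1) ^ ((l (i + 1) : ℤ) - 1)
          * (-Ssum K₀ r uvar (i + 1 + 1)) ^ ((l (i + 1 + 1) : ℤ) - 1)
          * ∏ j ∈ Icc (i + 1) (r - 2), uvar (j + 1) ^ ((l (j + 1 + 1) : ℤ) - 1)
      = ∑ i ∈ Icc 1 (r - 2), T₀ i := by
    refine Finset.sum_congr rfl fun i hi => ?_
    have hi1 : 1 ≤ i := by simp at hi; omega
    have e1 : ∏ j ∈ Icc 1 (i - 1), uvar (j + 1) ^ ((l (j + 1) : ℤ) - 1)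
        = ∏ j ∈ Icc 2 i, uvar j ^ ((l j : ℤ) - 1) := by
      rw [prod_Icc_shift 1 (i - 1) (fun j => uvar j ^ ((l j : ℤ) - 1)),
        show i - 1 + 1 = i by omega]
    have e2 : ∏ j ∈ Icc (i + 1) (r - 2), uvar (j + 1) ^ ((l (j + 1 + 1) : ℤ) - 1)
        = ∏ j ∈ Icc (i + 1 + 1) (r - 1), uvar j ^ ((l (j + 1) : ℤ) - 1) := by
      rw [prod_Icc_shift (i + 1) (r - 2) (fun j => uvar j ^ ((l (j + 1) : ℤ) - 1)), h2]
    rw [e1, e2, hT₀]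
  have hA' : ∏ x ∈ Icc 1 (r - 2), uvar (x + 1) ^ ((l (x + 1 + 1) : ℤ) - 1)
      = ∏ j ∈ Icc 2 (r - 1), uvar j ^ ((l (j + 1) : ℤ) - 1) := by
    rw [prod_Icc_shift 1 (r - 2) (fun j => uvar j ^ ((l (j + 1) : ℤ) - 1)), h2]
  have hC' : ∏ x ∈ Icc 1 (r - 2), uvar (x + 1) ^ ((l (x + 1) : ℤ) - 1)
      = ∏ j ∈ Icc 2 (r - 1), uvar j ^ ((l j : ℤ) - 1) := by
    rw [prod_Icc_shift 1 (r - 2) (fun j => uvar j ^ ((l j : ℤ) - 1)), h2]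
  have hP1 : ∏ j ∈ Icc 1 (r - 1), uvar j ^ ((l (j + 1) : ℤ) - 1)
      = uvar 1 ^ ((l 2 : ℤ) - 1) * ∏ j ∈ Icc 2 (r - 1), uvar j ^ ((l (j + 1) : ℤ) - 1) := by
    rw [prod_Icc_bot (show 1 ≤ r - 1 by omega) (fun j => uvar j ^ ((l (j + 1) : ℤ) - 1))]
  have hP0 : ∏ j ∈ Icc 1 (r - 1), uvar j ^ ((l j : ℤ) - 1)
      = uvar 1 ^ ((l 1 : ℤ) - 1) * ∏ j ∈ Icc 2 (r - 1), uvar j ^ ((l j : ℤ) - 1) := by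
    rw [prod_Icc_bot (show 1 ≤ r - 1 by omega) (fun j => uvar j ^ ((l j : ℤ) - 1))]
  have hU : ∏ j ∈ Icc 1 r, uvar j
      = uvar 1 * ((∏ j ∈ Icc 2 (r - 1), uvar j) * uvar r) := by
    rw [prod_Icc_bot (show 1 ≤ r by omega) uvar,
      prod_Icc_top (show 1 + 1 ≤ r from hr) (by omega) uvar]
  have hU' : ∏ j ∈ Icc 2 r, uvar j = (∏ j ∈ Icc 2 (r - 1), uvar j) * uvar r := by
    rw [prod_Icc_top hr (by omega) uvar]
  have hcorr : ∏ j ∈ Icc 2 (r - 1), uvar j ^ (l (j + 1))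
      = (∏ j ∈ Icc 2 (r - 1), uvar j) * ∏ j ∈ Icc 2 (r - 1), uvar j ^ ((l (j + 1) : ℤ) - 1) := by
    rw [← Finset.prod_mul_distrib]
    exact Finset.prod_congr rfl fun j _ => pow_eq_mul_zpow (uvar_ne_zero j) _
  have hpow : uvar 1 ^ (l 1) = uvar 1 * uvar 1 ^ ((l 1 : ℤ) - 1) :=
    pow_eq_mul_zpow (uvar_ne_zero 1) _
  rw [hBL, hBR, hA', hC', hP1, hP0, hU, hU', hcorr, hpow]
  ring
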